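/- arXiv:2505.06842 — 6 statements merged into one kernel-verified Lean document; each statement's English description precedes it below -/
import Mathlib

section
/- If the system is s-sparse observable (every subsystem obtained by removing any s of the p sensors is differentially observable of order l), then the set of plausible initial states equals the union, over all sensor subsets Γ of cardinality p − s for which the data (U, Y^Γ) is consistent, of the singleton {𝓛_Γ(U, Y^Γ)}. -/
/-- Partial measurement: restriction of the output map `c` to sensors in `Γ`. -/
def out {n p : ℕ} (c : (Fin n → ℝ) → Fin p → ℝ) (Γ : Finset (Fin p))
    (x : Fin n → ℝ) : {i // i ∈ Γ} → ℝ := fun i => c x i.1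

/-- Restriction of full measurement data to sensors in `Γ`. -/
def res {p l : ℕ} (Γ : Finset (Fin p)) (y : Fin (l+1) → Fin p → ℝ) :
    Fin (l+1) → ({i // i ∈ Γ} → ℝ) := fun j i => y j i.1

/-- `z` is a trajectory of `x_{k+1} = F x_k u_k` over `l` steps. -/
def Traj {n m l : ℕ} (F : (Fin n → ℝ) → (Fin m → ℝ) → (Fin n → ℝ))
    (u : Fin l → (Fin m → ℝ)) (z : Fin (l+1) → (Fin n → ℝ)) : Prop :=
  ∀ j : Fin l, z j.succ = F (z j.castSucc) (u j)

/-- `L` is an exact observability map of order `l` for the `Γ`-subsystem: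
it recovers the initial state from attack-free input-output data. -/
def IsObsMap {n m p l : ℕ} (F : (Fin n → ℝ) → (Fin m → ℝ) → (Fin n → ℝ))
    (c : (Fin n → ℝ) → Fin p → ℝ) (Γ : Finset (Fin p))
    (L : (Fin l → (Fin m → ℝ)) → (Fin (l+1) → ({i // i ∈ Γ} → ℝ)) → (Fin n → ℝ)) : Prop :=
  ∀ u z, Traj F u z → L u (fun j => out c Γ (z j)) = z 0

/-- The data `(u, Y)` is consistent for the `Γ`-subsystem with observability map `L`. -/
def Consistent {n m p l : ℕ} (F : (Fin n → ℝ) → (Fin m → ℝ) → (Fin n → ℝ))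
    (c : (Fin n → ℝ) → Fin p → ℝ) (Γ : Finset (Fin p))
    (L : (Fin l → (Fin m → ℝ)) → (Fin (l+1) → ({i // i ∈ Γ} → ℝ)) → (Fin n → ℝ))
    (u : Fin l → (Fin m → ℝ)) (Y : Fin (l+1) → ({i // i ∈ Γ} → ℝ)) : Prop :=
  ∃ z : Fin (l+1) → (Fin n → ℝ),
    z 0 = L u Y ∧ Traj F u z ∧ ∀ j, out c Γ (z j) = Y j

/-- `z0` is a plausible initial state for data `(u, y)` under at most `s` attacked sensors. -/
def Plausible {n m p l : ℕ} (F : (Fin n → ℝ) → (Fin m → ℝ) → (Fin n → ℝ))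
    (c : (Fin n → ℝ) → Fin p → ℝ) (s : ℕ) (u : Fin l → (Fin m → ℝ))
    (y : Fin (l+1) → Fin p → ℝ) (z0 : Fin n → ℝ) : Prop :=
  ∃ z : Fin (l+1) → (Fin n → ℝ), z 0 = z0 ∧ Traj F u z ∧
    ∃ A : Finset (Fin p), A.card ≤ s ∧ ∀ j, ∀ i ∉ A, y j i = c (z j) i

/-- under `s`-sparse observability, the set of plausible initial states
equals the union of consistent estimates over sensor subsets of cardinality `p - s`. -/
theorem stmt2 {n m p l : ℕ} (F : (Fin n → ℝ) → (Fin m → ℝ) → (Fin n → ℝ))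
    (c : (Fin n → ℝ) → Fin p → ℝ) (s : ℕ)
    (L : (Γ : Finset (Fin p)) →
      (Fin l → (Fin m → ℝ)) → (Fin (l+1) → ({i // i ∈ Γ} → ℝ)) → (Fin n → ℝ))
    (hL : ∀ Γ : Finset (Fin p), Γ.card = p - s → IsObsMap F c Γ (L Γ))
    (u : Fin l → (Fin m → ℝ)) (y : Fin (l+1) → Fin p → ℝ) :
    {z0 | Plausible F c s u y z0} =
      {z0 | ∃ Γ : Finset (Fin p), Γ.card = p - s ∧
        Consistent F c Γ (L Γ) u (res Γ y) ∧ z0 = L Γ u (res Γ y)} := by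
  ext z0
  simp only [Set.mem_setOf_eq]
  constructor
  · rintro ⟨z, hz0, htraj, A, hA, hagree⟩
    have hsub : p - s ≤ Aᶜ.card := by
      rw [Finset.card_compl, Fintype.card_fin]
      exact Nat.sub_le_sub_left hA p
    obtain ⟨Γ, hΓA, hΓcard⟩ := Finset.exists_subset_card_eq hsub
    have hres : (fun j => out c Γ (z j)) = res Γ y := by
      funext j i
      exact (hagree j i.1 (fun h => (Finset.mem_compl.mp (hΓA i.2)) h)).symm
    have hobs := hL Γ hΓcard u z htraj
    rw [hres] at hobs
    exact ⟨Γ, hΓcard, ⟨z, hobs.symm, htraj, fun j => by rw [← hres]⟩,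
      by rw [hobs, hz0]⟩
  · rintro ⟨Γ, hΓcard, ⟨z, hz0, htraj, hout⟩, rfl⟩
    refine ⟨z, hz0, htraj, Γᶜ, ?_, ?_⟩
    · rw [Finset.card_compl, Fintype.card_fin, hΓcard]
      omega
    · intro j i hi
      have hiΓ : i ∈ Γ := by simpa using hi
      have := congrFun (hout j) ⟨i, hiΓ⟩
      exact this.symm
end

section
/- If the system is 2s-sparse observable and at most s sensors are attacked, then for every sensor subset Γ of cardinality p − s such that the data (U, Y^Γ) is consistent, the observability map returns the true initial state: 𝓛_Γ(U, Y^Γ) = x_{k−l}. -/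
/-- under `2s`-sparse observability and at most `s` attacked sensors,
every consistent estimate from `p - s` sensors equals the true initial state. -/
theorem stmt3 {n m p l : ℕ} (F : (Fin n → ℝ) → (Fin m → ℝ) → (Fin n → ℝ))
    (c : (Fin n → ℝ) → Fin p → ℝ) (s : ℕ)
    (L : (Γ : Finset (Fin p)) →
      (Fin l → (Fin m → ℝ)) → (Fin (l+1) → ({i // i ∈ Γ} → ℝ)) → (Fin n → ℝ))
    (hL : ∀ Γ : Finset (Fin p), p - 2*s ≤ Γ.card → IsObsMap F c Γ (L Γ))
    (A : Finset (Fin p)) (hA : A.card ≤ s)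
    (u : Fin l → (Fin m → ℝ)) (x : Fin (l+1) → (Fin n → ℝ)) (hx : Traj F u x)
    (y : Fin (l+1) → Fin p → ℝ) (hy : ∀ j, ∀ i ∉ A, y j i = c (x j) i)
    (Γ : Finset (Fin p)) (hΓ : Γ.card = p - s)
    (hcons : Consistent F c Γ (L Γ) u (res Γ y)) :
    L Γ u (res Γ y) = x 0 := by
  obtain ⟨z, hz0, hzT, hzout⟩ := hcons
  set Γ' := Γ \ A with hΓ'
  have hcard : p - 2*s ≤ Γ'.card := by
    have h1 : Γ.card ≤ Γ'.card + A.card := Finset.card_le_card_sdiff_add_card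
    omega
  have hobs := hL Γ' hcard
  have hout : ∀ j, out c Γ' (z j) = out c Γ' (x j) := by
    intro j
    funext i
    obtain ⟨i, hi⟩ := i
    have hiΓ : i ∈ Γ := (Finset.mem_sdiff.mp hi).1
    have hiA : i ∉ A := (Finset.mem_sdiff.mp hi).2
    have h1 : c (z j) i = y j i := by
      have := congrFun (hzout j) ⟨i, hiΓ⟩
      simpa [out, res] using this
    have h2 : y j i = c (x j) i := hy j i hiA
    simp [out, h1, h2]
  have hz := hobs u z hzT
  have hxo := hobs u x hx
  rw [← hz0]
  rw [show (fun j => out c Γ' (z j)) = (fun j => out c Γ' (x j)) from funext hout] at hz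
  rw [hz] at hxo
  exact hxo
end

section
/- Suppose h is a zero-order control barrier function: for all x there exists u with h(F(x,u)) − h(x) ≥ −γ(h(x)) + ε, where γ is an extended class-K function with |γ(s)| ≤ |s|, and ε > 0. If at every step k the applied input u_k satisfies h(F(x_k, u_k)) − h(x_k) ≥ −γ(h(x_k)) + ε, and h(x_0) ≥ 0, then h(x_k) ≥ ε > 0 for all k ≥ 1. -/
/-- zero-order CBF discrete-time invariance: if the applied input satisfies the
CBF decrease condition at every step and `h(x 0) ≥ 0`, then `h(x k) ≥ ε` for all `k ≥ 1`. -/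
theorem stmt5 {n m : ℕ} (F : (Fin n → ℝ) → (Fin m → ℝ) → (Fin n → ℝ))
    (h : (Fin n → ℝ) → ℝ) (γ : ℝ → ℝ) (ε : ℝ)
    (hγc : Continuous γ) (hγm : StrictMono γ) (hγ0 : γ 0 = 0)
    (hγb : ∀ s : ℝ, |γ s| ≤ |s|) (hε : 0 < ε)
    (hcbf : ∀ x : Fin n → ℝ, ∃ u : Fin m → ℝ, h (F x u) - h x ≥ -γ (h x) + ε)
    (x : ℕ → (Fin n → ℝ)) (u : ℕ → (Fin m → ℝ))
    (hdyn : ∀ k, x (k+1) = F (x k) (u k))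
    (hstep : ∀ k, h (F (x k) (u k)) - h (x k) ≥ -γ (h (x k)) + ε)
    (h0 : h (x 0) ≥ 0) :
    ∀ k, 1 ≤ k → ε ≤ h (x k) := by
  have key : ∀ k, 0 ≤ h (x k) → ε ≤ h (x (k+1)) := by
    intro k hk
    have hs := hstep k
    have hb := hγb (h (x k))
    rw [abs_of_nonneg hk] at hb
    have hγle : γ (h (x k)) ≤ h (x k) := (abs_le.mp hb).2
    rw [hdyn k]
    linarith
  intro k hk
  induction k with
  | zero => omega
  | succ k ih =>
    rcases Nat.eq_or_lt_of_le hk with h1 | h1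
    · obtain rfl : k = 0 := by omega
      exact key 0 h0
    · exact key k (le_trans hε.le (ih (by omega)))
end

section
/- If under s-sparse observability the secure safety filter is feasible at every step—i.e., at each step k there exists an input u satisfying h(F(z,u)) − h(z) ≥ −γ(h(z)) + ε simultaneously for all z in the current plausible set 𝒳_k^k—then applying such inputs keeps h(x_k) ≥ ε for all k ≥ 1 whenever h(x_0) ≥ 0, since the true state always lies in 𝒳_k^k. -/
/-- if the secure safety filter is feasible at every step (the applied input
satisfies the CBF condition for every plausible state), then since the true state is always
plausible, safety holds: `h(x k) ≥ ε` for all `k ≥ 1` whenever `h(x 0) ≥ 0`. -/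
theorem stmt6 {n m : ℕ} (F : (Fin n → ℝ) → (Fin m → ℝ) → (Fin n → ℝ))
    (h : (Fin n → ℝ) → ℝ) (γ : ℝ → ℝ) (ε : ℝ)
    (hγc : Continuous γ) (hγm : StrictMono γ) (hγ0 : γ 0 = 0)
    (hγb : ∀ s : ℝ, |γ s| ≤ |s|) (hε : 0 < ε)
    (X : ℕ → Set (Fin n → ℝ))
    (x : ℕ → (Fin n → ℝ)) (u : ℕ → (Fin m → ℝ))
    (hdyn : ∀ k, x (k+1) = F (x k) (u k))
    (hmem : ∀ k, x k ∈ X k)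
    (hfeas : ∀ k, ∀ z ∈ X k, h (F z (u k)) - h z ≥ -γ (h z) + ε)
    (h0 : h (x 0) ≥ 0) :
    ∀ k, 1 ≤ k → ε ≤ h (x k) := by
  have key : ∀ k, 0 ≤ h (x k) → ε ≤ h (x (k+1)) := by
    intro k hk
    have hf := hfeas k (x k) (hmem k)
    rw [← hdyn k] at hf
    have hγle : γ (h (x k)) ≤ h (x k) := by
      calc γ (h (x k)) ≤ |γ (h (x k))| := le_abs_self _
        _ ≤ |h (x k)| := hγb _
        _ = h (x k) := abs_of_nonneg hk
    linarith
  have hnn : ∀ k, 0 ≤ h (x k) := by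
    intro k
    induction k with
    | zero => exact h0
    | succ j ih => exact le_of_lt (lt_of_lt_of_le hε (key j ih))
  intro k hk
  obtain ⟨j, rfl⟩ := Nat.exists_eq_add_of_le hk
  rw [Nat.add_comm]
  exact key j (hnn j)
end

section
/- Let γ be an extended class-K function with |γ(s)| ≤ |s| for all s. If a real sequence satisfies h_{k+1} ≥ h_k − γ(h_k) + ε with ε > 0 and h_0 ≥ 0, then h_k ≥ ε for all k ≥ 1. -/
/-- discrete-time CBF invariance for a real sequence. -/
theorem stmt15 (γ : ℝ → ℝ) (hγc : Continuous γ) (hγm : StrictMono γ) (hγ0 : γ 0 = 0)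
    (hγb : ∀ s : ℝ, |γ s| ≤ |s|)
    (h : ℕ → ℝ) (ε : ℝ) (hε : 0 < ε)
    (hstep : ∀ k, h (k+1) ≥ h k - γ (h k) + ε) (h0 : h 0 ≥ 0) :
    ∀ k, 1 ≤ k → ε ≤ h k := by
  have key : ∀ k, 0 ≤ h k → ε ≤ h (k+1) := by
    intro k hk
    have hγle : γ (h k) ≤ h k := by
      calc γ (h k) ≤ |γ (h k)| := le_abs_self _
        _ ≤ |h k| := hγb _
        _ = h k := abs_of_nonneg hk
    have := hstep k
    linarith
  have nonneg : ∀ k, 0 ≤ h k := by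
    intro k
    induction k with
    | zero => exact h0
    | succ n ih => linarith [key n ih]
  intro k hk
  obtain ⟨m, rfl⟩ := Nat.exists_eq_add_of_le' hk
  exact key m (nonneg m)
end

section
/- Under 2s-sparse observability and at most s attacked sensors, the forward-propagated plausible set 𝒳_k^k is a singleton equal to {x_k}, the true current state. -/
lemma traj_unique {n m l : ℕ} {F : (Fin n → ℝ) → (Fin m → ℝ) → (Fin n → ℝ)}
    {u : Fin l → (Fin m → ℝ)} {z w : Fin (l+1) → (Fin n → ℝ)}
    (hz : Traj F u z) (hw : Traj F u w) (h0 : z 0 = w 0) : z = w := by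
  funext j
  induction j using Fin.induction with
  | zero => exact h0
  | succ j ih => rw [hz j, hw j, ih]

/-- under `2s`-sparse observability and at most `s` attacked sensors, the
forward-propagated plausible set is the singleton consisting of the true current state. -/
theorem stmt19 {n m p l : ℕ} (F : (Fin n → ℝ) → (Fin m → ℝ) → (Fin n → ℝ))
    (c : (Fin n → ℝ) → Fin p → ℝ) (s : ℕ)
    (L : (Γ : Finset (Fin p)) →
      (Fin l → (Fin m → ℝ)) → (Fin (l+1) → ({i // i ∈ Γ} → ℝ)) → (Fin n → ℝ))
    (hL : ∀ Γ : Finset (Fin p), p - 2*s ≤ Γ.card → IsObsMap F c Γ (L Γ))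
    (A : Finset (Fin p)) (hA : A.card ≤ s)
    (u : Fin l → (Fin m → ℝ)) (x : Fin (l+1) → (Fin n → ℝ)) (hx : Traj F u x)
    (y : Fin (l+1) → Fin p → ℝ) (hy : ∀ j, ∀ i ∉ A, y j i = c (x j) i) :
    {zl | ∃ z : Fin (l+1) → (Fin n → ℝ),
        Plausible F c s u y (z 0) ∧ Traj F u z ∧ z (Fin.last l) = zl} =
      {x (Fin.last l)} := by
  ext zl
  simp only [Set.mem_setOf_eq, Set.mem_singleton_iff]
  constructor
  · rintro ⟨z, ⟨w, hw0, hwT, B, hB, hyB⟩, hzT, rfl⟩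
    -- show z 0 = x 0 using the observability map on Γ = (A ∪ B)ᶜ
    set Γ : Finset (Fin p) := (A ∪ B)ᶜ with hΓ
    have hcard : p - 2*s ≤ Γ.card := by
      have h1 : (A ∪ B).card ≤ 2*s := by
        calc (A ∪ B).card ≤ A.card + B.card := Finset.card_union_le A B
        _ ≤ s + s := Nat.add_le_add hA hB
        _ = 2*s := (two_mul s).symm
      have := Finset.card_compl (A ∪ B)
      rw [hΓ, this, Fintype.card_fin]
      exact Nat.sub_le_sub_left h1 p
    have hobs := hL Γ hcard
    have hΓA : ∀ i : Fin p, i ∈ Γ → i ∉ A := by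
      intro i hi
      simp [hΓ, Finset.mem_compl, Finset.mem_union] at hi
      exact hi.1
    have hΓB : ∀ i : Fin p, i ∈ Γ → i ∉ B := by
      intro i hi
      simp [hΓ, Finset.mem_compl, Finset.mem_union] at hi
      exact hi.2
    have hout : (fun j => out c Γ (x j)) = fun j => out c Γ (w j) := by
      funext j i
      have h1 := (hy j i.1 (hΓA i.1 i.2)).symm
      have h2 := hyB j i.1 (hΓB i.1 i.2)
      simp only [out]
      rw [h1, h2]
    have e1 := hobs u x hx
    have e2 := hobs u w hwT
    rw [hout] at e1
    have hx0w0 : x 0 = w 0 := by rw [← e1, ← e2]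
    have hz0 : z 0 = x 0 := by rw [hx0w0, hw0]
    have := traj_unique hzT hx hz0
    rw [this]
  · rintro rfl
    exact ⟨x, ⟨x, rfl, hx, A, hA, hy⟩, hx, rfl⟩
end
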